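/- Let g ≥ 0 and let f₁, f₂ : ℝ → ℝ be C¹ and T-periodic (T > 0). Let a, u, b, w, c, z : [0,1] → ℝ be C¹ functions such that for every s ∈ [0,1]: u(s) > 0 > w(s), a(s) < b(s) < c(s), and f₂(b(s)) − f₁(a(s)) = u(s)·(b(s) − a(s)) − (g/2)·(b(s) − a(s))²; w(s) = −u(s) + g·(b(s) − a(s)) + 2f₂'(b(s)); f₂(b(s)) − f₁(c(s)) = −w(s)·(c(s) − b(s)) + (g/2)·(c(s) − b(s))²; z(s) = u(s) + g·(c(s) − 2b(s) + a(s)) + 2f₁'(c(s)) − 2f₂'(b(s)). Assume the closedness conditions a(1) = a(0) + T, c(1) = c(0) + T, u(1) = u(0), z(1) = z(0). Then ∫₀¹ (u(s)²/2 + g·f₁(a(s)) − u(s)·f₁'(a(s)))·a'(s) ds = ∫₀¹ (z(s)²/2 + g·f₁(c(s)) − z(s)·f₁'(c(s)))·c'(s) ds. -/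

import Mathlib

/-!
With energy `H = v²/2 + g x`, the integrand `λ(t, v) = v²/2 + g f₁(t) - v f₁'(t)` is
`H dt - p dq` restricted to the wall `q = f₁(t)`. By Hamilton–Jacobi, the action `S` of a free
flight satisfies `dS = (p dq - H dt)|_end - (p dq - H dt)|_start`, and an elastic reflection at a
moving wall, which reflects `v - f'(t)`, leaves `H dt - p dq` unchanged. Hence the total action
`F(s)` of the two flights satisfies `dF = λ(a, u) da - λ(c, z) dc`, and the two loop integrals
differ by `F(1) - F(0)`. This vanishes because the data `(a, u, c, z)` at `s = 1` are those at
`s = 0` shifted by the period; the upper collision time is not pinned down by them, but the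
collision equations determine it through a linear equation whose degenerate case makes `F`
independent of it.
-/

open Filter Topology intervalIntegral
open Set

theorem Function.Periodic.deriv {f : ℝ → ℝ} {T : ℝ} (h : Function.Periodic f T) :
    Function.Periodic (deriv f) T := fun x => by
  rw [← deriv_comp_add_const, h.funext]

/-- The Lagrangian action `∫₀^τ (ẋ²/2 - g x) dt` of the free flight `x t = x₀ + v t - g t² / 2`. -/
noncomputable def flightAction (g τ v x₀ : ℝ) : ℝ :=
  τ * (v ^ 2 / 2 - g * x₀ - g * v * τ + g ^ 2 * τ ^ 2 / 3)

noncomputable def wallForm (g : ℝ) (f : ℝ → ℝ) (t v : ℝ) : ℝ :=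
  v ^ 2 / 2 + g * f t - v * deriv f t

theorem wallForm_reflect (g : ℝ) (f : ℝ → ℝ) (t v : ℝ) :
    wallForm g f t (2 * deriv f t - v) = wallForm g f t v := by
  unfold wallForm; ring

theorem hasDerivAt_flightAction {g : ℝ} {f₀ f₁ A B U : ℝ → ℝ} {A' B' s : ℝ}
    (hf₀ : DifferentiableAt ℝ f₀ (A s)) (hf₁ : DifferentiableAt ℝ f₁ (B s))
    (hA : HasDerivAt A A' s) (hB : HasDerivAt B B' s) (hU : DifferentiableAt ℝ U s)
    (hflight : ∀ᶠ t in 𝓝 s,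
      f₁ (B t) - f₀ (A t) = U t * (B t - A t) - g / 2 * (B t - A t) ^ 2) :
    HasDerivAt (fun t => flightAction g (B t - A t) (U t) (f₀ (A t)))
      (wallForm g f₀ (A s) (U s) * A' - wallForm g f₁ (B s) (U s - g * (B s - A s)) * B') s := by
  have hU' := hU.hasDerivAt
  have hf₀A := hf₀.hasDerivAt.comp s hA
  have hf₁B := hf₁.hasDerivAt.comp s hB
  have hL := hB.sub hA
  have hconstraint := (hf₁B.sub hf₀A).unique
    (((hU'.mul hL).sub ((hL.pow 2).const_mul (g / 2))).congr_of_eventuallyEq hflight)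
  have hflight_s := hflight.self_of_nhds
  have H := hL.mul (((((hU'.pow 2).div_const 2).sub (hf₀A.const_mul g)).sub
    ((hU'.const_mul g).mul hL)).add (((hL.pow 2).const_mul (g ^ 2)).div_const 3))
  refine H.congr_deriv ?_
  simp only [wallForm, Pi.sub_apply, Pi.add_apply, Pi.mul_apply, Pi.pow_apply,
    Function.comp_apply] at hconstraint ⊢
  push_cast at hconstraint ⊢
  linear_combination -(U s - g * (B s - A s)) * hconstraint + g * B' * hflight_s

/-- The collision equations of a return `(a, u) ↦ (b, w) ↦ (c, z)` from the lower wall `f₁`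
to the upper wall `f₂` and back. -/
def IsReturn (g : ℝ) (f₁ f₂ : ℝ → ℝ) (a u b w c z : ℝ) : Prop :=
  f₂ b - f₁ a = u * (b - a) - g / 2 * (b - a) ^ 2 ∧
  w = -u + g * (b - a) + 2 * deriv f₂ b ∧
  f₂ b - f₁ c = -w * (c - b) + g / 2 * (c - b) ^ 2 ∧
  z = u + g * (c - 2 * b + a) + 2 * deriv f₁ c - 2 * deriv f₂ b

noncomputable def returnAction (g : ℝ) (f₁ f₂ : ℝ → ℝ) (a u b w c : ℝ) : ℝ :=
  flightAction g (b - a) u (f₁ a) + flightAction g (c - b) w (f₂ b)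

theorem hasDerivAt_returnAction {g : ℝ} {f₁ f₂ a u b w c z : ℝ → ℝ} {a' b' c' s : ℝ}
    (hf₁a : DifferentiableAt ℝ f₁ (a s)) (hf₂b : DifferentiableAt ℝ f₂ (b s))
    (hf₁c : DifferentiableAt ℝ f₁ (c s))
    (ha : HasDerivAt a a' s) (hb : HasDerivAt b b' s) (hc : HasDerivAt c c' s)
    (hu : DifferentiableAt ℝ u s) (hw : DifferentiableAt ℝ w s)
    (hR : ∀ᶠ t in 𝓝 s, IsReturn g f₁ f₂ (a t) (u t) (b t) (w t) (c t) (z t)) :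
    HasDerivAt (fun t => returnAction g f₁ f₂ (a t) (u t) (b t) (w t) (c t))
      (wallForm g f₁ (a s) (u s) * a' - wallForm g f₁ (c s) (z s) * c') s := by
  have hflight₁ := hasDerivAt_flightAction hf₁a hf₂b ha hb hu (hR.mono fun t ht => ht.1)
  have hflight₂ := hasDerivAt_flightAction hf₂b hf₁c hb hc hw
    (hR.mono fun t ht => by linear_combination -ht.2.2.1)
  obtain ⟨-, hw_s, -, hz_s⟩ := hR.self_of_nhds
  -- both collisions reflect the velocity relative to the moving wall
  have hreflect_b : u s - g * (b s - a s) = 2 * deriv f₂ (b s) - w s := by linarith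
  have hreflect_c : w s - g * (c s - b s) = 2 * deriv f₁ (c s) - z s := by linarith
  refine (hflight₁.add hflight₂).congr_deriv ?_
  rw [hreflect_b, hreflect_c, wallForm_reflect, wallForm_reflect]
  ring

section Periodic

variable {g T : ℝ} {f₁ f₂ : ℝ → ℝ}

theorem IsReturn.of_add_period (h₁ : Function.Periodic f₁ T) (h₂ : Function.Periodic f₂ T)
    {a u b w c z : ℝ} (h : IsReturn g f₁ f₂ (a + T) u (b + T) w (c + T) z) :
    IsReturn g f₁ f₂ a u b w c z := by
  have hshift : c + T - 2 * (b + T) + (a + T) = c - 2 * b + a := by ring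
  simpa only [IsReturn, h₁ a, h₁ c, h₂ b, h₁.deriv c, h₂.deriv b, add_sub_add_right_eq_sub,
    hshift] using h

theorem returnAction_add_period (h₁ : Function.Periodic f₁ T) (h₂ : Function.Periodic f₂ T)
    (a u b w c : ℝ) :
    returnAction g f₁ f₂ (a + T) u (b + T) w (c + T) = returnAction g f₁ f₂ a u b w c := by
  simp only [returnAction, h₁ a, h₂ b, add_sub_add_right_eq_sub]

end Periodic

/-- Given the outgoing data `(a, u)` and the returning data `(c, z)`, the collision equations
fix the upper collision time `b` through a linear equation; when its coefficient vanishes, the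
action no longer depends on `b`. -/
theorem IsReturn.returnAction_eq {g : ℝ} {f₁ f₂ : ℝ → ℝ} {a u b w b' w' c z : ℝ}
    (h : IsReturn g f₁ f₂ a u b w c z) (h' : IsReturn g f₁ f₂ a u b' w' c z) :
    returnAction g f₁ f₂ a u b w c = returnAction g f₁ f₂ a u b' w' c := by
  obtain ⟨hb, hwb, hc, hz⟩ := h
  obtain ⟨hb', hwb', hc', hz'⟩ := h'
  have hw : w = 2 * deriv f₁ c - z + g * (c - b) := by linear_combination hwb + hz
  have hw' : w' = 2 * deriv f₁ c - z + g * (c - b') := by linear_combination hwb' + hz'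
  have hlinear : (b - b') * (u - (2 * deriv f₁ c - z) - g * (c - a)) = 0 := by
    linear_combination hc - hb - (c - b) * hw - hc' + hb' + (c - b') * hw'
  have hxb : f₂ b = f₁ a + u * (b - a) - g / 2 * (b - a) ^ 2 := by linear_combination hb
  have hxb' : f₂ b' = f₁ a + u * (b' - a) - g / 2 * (b' - a) ^ 2 := by linear_combination hb'
  simp only [returnAction, flightAction]
  rw [hw, hw', hxb, hxb']
  linear_combination (u + (2 * deriv f₁ c - z) - g * (c - a)) / 2 * hlinear

theorem returnAction_eq_of_isReturn_add_period {g T : ℝ} {f₁ f₂ : ℝ → ℝ}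
    (h₁ : Function.Periodic f₁ T) (h₂ : Function.Periodic f₂ T) {a u b w b' w' c z : ℝ}
    (h : IsReturn g f₁ f₂ a u b w c z) (h' : IsReturn g f₁ f₂ (a + T) u b' w' (c + T) z) :
    returnAction g f₁ f₂ (a + T) u b' w' (c + T) = returnAction g f₁ f₂ a u b w c := by
  rw [← sub_add_cancel b' T] at h' ⊢
  rw [returnAction_add_period h₁ h₂, (h'.of_add_period h₁ h₂).returnAction_eq h]

theorem continuousOn_returnAction {g : ℝ} {f₁ f₂ a u b w c : ℝ → ℝ} {S : Set ℝ}
    (hf₁ : Continuous f₁) (hf₂ : Continuous f₂) (ha : ContinuousOn a S) (hu : ContinuousOn u S)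
    (hb : ContinuousOn b S) (hw : ContinuousOn w S) (hc : ContinuousOn c S) :
    ContinuousOn (fun t => returnAction g f₁ f₂ (a t) (u t) (b t) (w t) (c t)) S := by
  unfold returnAction flightAction
  fun_prop

theorem ContDiffOn.continuousOn_wallForm_mul_derivWithin {g : ℝ} {f a u : ℝ → ℝ} {S : Set ℝ}
    (hf : ContDiff ℝ 1 f) (ha : ContDiffOn ℝ 1 a S) (hu : ContDiffOn ℝ 1 u S)
    (hS : UniqueDiffOn ℝ S) :
    ContinuousOn (fun s => wallForm g f (a s) (u s) * derivWithin a S s) S := by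
  have hf' := hf.continuous_deriv le_rfl
  have hf := hf.continuous
  have ha' := ha.continuousOn_derivWithin hS le_rfl
  have ha := ha.continuousOn
  have hu := hu.continuousOn
  unfold wallForm
  fun_prop

theorem fermi_ulam_loop_integral_invariant
    (g T : ℝ) (f₁ f₂ : ℝ → ℝ)
    (hf₁ : ContDiff ℝ 1 f₁) (hf₂ : ContDiff ℝ 1 f₂)
    (hper₁ : Function.Periodic f₁ T) (hper₂ : Function.Periodic f₂ T)
    (a u b w c z : ℝ → ℝ)
    (ha : ContDiffOn ℝ 1 a (Set.Icc 0 1)) (hu : ContDiffOn ℝ 1 u (Set.Icc 0 1))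
    (hb : ContDiffOn ℝ 1 b (Set.Icc 0 1)) (hw : ContDiffOn ℝ 1 w (Set.Icc 0 1))
    (hc : ContDiffOn ℝ 1 c (Set.Icc 0 1)) (hz : ContDiffOn ℝ 1 z (Set.Icc 0 1))
    (hstep : ∀ s ∈ Set.Icc (0 : ℝ) 1,
      0 < u s ∧ w s < 0 ∧ a s < b s ∧ b s < c s ∧
      f₂ (b s) - f₁ (a s) = u s * (b s - a s) - g / 2 * (b s - a s) ^ 2 ∧
      w s = -(u s) + g * (b s - a s) + 2 * deriv f₂ (b s) ∧
      f₂ (b s) - f₁ (c s) = -(w s) * (c s - b s) + g / 2 * (c s - b s) ^ 2 ∧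
      z s = u s + g * (c s - 2 * b s + a s)
        + 2 * deriv f₁ (c s) - 2 * deriv f₂ (b s))
    (hclose_a : a 1 = a 0 + T) (hclose_c : c 1 = c 0 + T)
    (hclose_u : u 1 = u 0) (hclose_z : z 1 = z 0) :
    ∫ s in (0 : ℝ)..1,
        ((u s) ^ 2 / 2 + g * f₁ (a s) - u s * deriv f₁ (a s))
          * derivWithin a (Set.Icc 0 1) s
      = ∫ s in (0 : ℝ)..1,
        ((z s) ^ 2 / 2 + g * f₁ (c s) - z s * deriv f₁ (c s))
          * derivWithin c (Set.Icc 0 1) s := by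
  have hR (s) (hs : s ∈ Icc (0 : ℝ) 1) :
      IsReturn g f₁ f₂ (a s) (u s) (b s) (w s) (c s) (z s) :=
    (hstep s hs).2.2.2.2
  have hderiv {φ : ℝ → ℝ} (hφ : ContDiffOn ℝ 1 φ (Icc 0 1)) {s} (hs : s ∈ Ioo (0 : ℝ) 1) :
      HasDerivAt φ (derivWithin φ (Icc 0 1) s) s :=
    (hφ.differentiableOn one_ne_zero s (Ioo_subset_Icc_self hs)).hasDerivWithinAt.hasDerivAt
      (Icc_mem_nhds hs.1 hs.2)
  set F := fun t => returnAction g f₁ f₂ (a t) (u t) (b t) (w t) (c t)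
  have hF_cont : ContinuousOn F (Icc 0 1) :=
    continuousOn_returnAction hf₁.continuous hf₂.continuous ha.continuousOn hu.continuousOn
      hb.continuousOn hw.continuousOn hc.continuousOn
  have hF_deriv (s) (hs : s ∈ Ioo (0 : ℝ) 1) : HasDerivAt F
      (wallForm g f₁ (a s) (u s) * derivWithin a (Icc 0 1) s
        - wallForm g f₁ (c s) (z s) * derivWithin c (Icc 0 1) s) s :=
    hasDerivAt_returnAction (hf₁.differentiable one_ne_zero _) (hf₂.differentiable one_ne_zero _)
      (hf₁.differentiable one_ne_zero _) (hderiv ha hs) (hderiv hb hs) (hderiv hc hs)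
      (hderiv hu hs).differentiableAt (hderiv hw hs).differentiableAt
      (eventually_of_mem (Icc_mem_nhds hs.1 hs.2) hR)
  have hF_closed : F 1 = F 0 := by
    have h₁ := hR 1 (right_mem_Icc.2 zero_le_one)
    rw [hclose_a, hclose_u, hclose_c, hclose_z] at h₁
    simp only [F, hclose_a, hclose_u, hclose_c]
    exact returnAction_eq_of_isReturn_add_period hper₁ hper₂
      (hR 0 (left_mem_Icc.2 zero_le_one)) h₁
  have hint_a : IntervalIntegrable _ MeasureTheory.volume 0 1 :=
    (ha.continuousOn_wallForm_mul_derivWithin (g := g) hf₁ hu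
      (uniqueDiffOn_Icc one_pos)).intervalIntegrable_of_Icc zero_le_one
  have hint_c : IntervalIntegrable _ MeasureTheory.volume 0 1 :=
    (hc.continuousOn_wallForm_mul_derivWithin (g := g) hf₁ hz
      (uniqueDiffOn_Icc one_pos)).intervalIntegrable_of_Icc zero_le_one
  have hFTC := integral_eq_sub_of_hasDerivAt_of_le zero_le_one hF_cont hF_deriv
    (hint_a.sub hint_c)
  rw [integral_sub hint_a hint_c, hF_closed, sub_self, sub_eq_zero] at hFTC
  exact hFTC
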